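/- arXiv:2408.01027 — 2 statements merged into one kernel-verified Lean document; each statement's English description precedes it below -/
import Mathlib

section
/- For every profile (v_1, ..., v_n) of 1-restricted additive chore valuations, the randomized allocation returned by RandChore on this profile (with reports equal to the true valuations) is ex-ante envy-free, ex-ante equitable, and ex-ante proportional, and is ex-post envy-free up to one item, ex-post equitable up to one item, and ex-post proportional up to one item, all with respect to (v_1, ..., v_n). -/
open Finset

attribute [local instance] Classical.propDecidable

noncomputable section

/-- The bundle of agent `i` under deterministic allocation `A`. -/
def bundle {m n : ℕ} (A : Fin m → Fin n) (i : Fin n) : Finset (Fin m) :=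
  Finset.univ.filter fun j => A j = i

/-- Additive value of a bundle. -/
def sval {m : ℕ} (f : Fin m → ℝ) (S : Finset (Fin m)) : ℝ := ∑ j ∈ S, f j

/-- The set `Q` of (indices of) items on which some agent reports value zero. -/
def chQ {n m : ℕ} (r : Fin n → Fin m → ℝ) : Finset (Fin m) :=
  Finset.univ.filter fun q => ∃ i, r i q = 0

/-- The set of agents reporting value zero on item `q`. -/
def chZ {n m : ℕ} (r : Fin n → Fin m → ℝ) (q : Fin m) : Finset (Fin n) :=
  Finset.univ.filter fun i => r i q = 0

/-- The position of item `q ∈ Q̄` in the list of the items of `Q̄` sorted in nonincreasing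
order of inherent value `w`, ties broken by smallest index. -/
def chRank {n m : ℕ} (w : Fin m → ℝ) (r : Fin n → Fin m → ℝ) (q : Fin m) : ℕ :=
  (((chQ r)ᶜ).filter fun q' => w q' > w q ∨ (w q' = w q ∧ q' < q)).card

/-- The probability that mechanism `RandChore`, on reported profile `r` (inherent values `w`),
outputs the deterministic allocation `A`: each item of `Q` goes independently and uniformly to
an agent reporting zero on it, and the items of `Q̄` are allocated round-robin (in nonincreasing
inherent value, ties by index) according to a uniformly random permutation of the agents. -/
def randChoreProb {n m : ℕ} (hn : 0 < n) (w : Fin m → ℝ) (r : Fin n → Fin m → ℝ)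
    (A : Fin m → Fin n) : ℝ :=
  ((∑ σ : Equiv.Perm (Fin n),
      if ∀ q ∈ (chQ r)ᶜ, A q = σ ⟨chRank w r q % n, Nat.mod_lt _ hn⟩ then (1 : ℝ) else 0)
    / (Fintype.card (Equiv.Perm (Fin n)) : ℝ))
  * ∏ q ∈ chQ r, (if r (A q) q = 0 then (1 : ℝ) / ((chZ r q).card : ℝ) else 0)

/-- The expected utility, under `RandChore` on reported profile `r`, of agent `i` whose true
additive valuation is `vi`. -/
def randChoreExp {n m : ℕ} (hn : 0 < n) (w : Fin m → ℝ) (r : Fin n → Fin m → ℝ)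
    (vi : Fin m → ℝ) (i : Fin n) : ℝ :=
  ∑ A : Fin m → Fin n, randChoreProb hn w r A * sval vi (bundle A i)

/-- The fractional allocation implemented by the randomized allocation `p`. -/
def implFrac {m n : ℕ} (p : (Fin m → Fin n) → ℝ) : Fin m → Fin n → ℝ :=
  fun j i => ∑ A, p A * (if A j = i then 1 else 0)

/-- Value of agent with item values `vi` for the fractional bundle of agent `i` in `a`. -/
def fval {m n : ℕ} (vi : Fin m → ℝ) (a : Fin m → Fin n → ℝ) (i : Fin n) : ℝ :=
  ∑ j, a j i * vi j

/-- Envy-freeness up to one item. -/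
def EF1 {m n : ℕ} (v : Fin n → Fin m → ℝ) (A : Fin m → Fin n) : Prop :=
  ∀ i j : Fin n, sval (v i) (bundle A i) ≥ sval (v i) (bundle A j) ∨
    ∃ e ∈ bundle A i ∪ bundle A j,
      sval (v i) ((bundle A i).erase e) ≥ sval (v i) ((bundle A j).erase e)

/-- Equitability up to one item. -/
def EQ1 {m n : ℕ} (v : Fin n → Fin m → ℝ) (A : Fin m → Fin n) : Prop :=
  ∀ i j : Fin n, sval (v i) (bundle A i) ≥ sval (v j) (bundle A j) ∨
    ∃ e ∈ bundle A i ∪ bundle A j,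
      sval (v i) ((bundle A i).erase e) ≥ sval (v j) ((bundle A j).erase e)

/-- Proportionality up to one item. -/
def PROP1 {m n : ℕ} (v : Fin n → Fin m → ℝ) (A : Fin m → Fin n) : Prop :=
  ∀ i : Fin n, sval (v i) (bundle A i) ≥ (∑ j, v i j) / (n : ℝ) ∨
    (∃ e ∉ bundle A i, sval (v i) (insert e (bundle A i)) ≥ (∑ j, v i j) / (n : ℝ)) ∨
    (∃ e ∈ bundle A i, sval (v i) ((bundle A i).erase e) ≥ (∑ j, v i j) / (n : ℝ))

/-!
Conditioned on the random permutation `σ`, `RandChore` assigns the items independently, so the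
marginal of an item is the average over `σ` of its conditional distributions: an item of `Q̄` goes
to each agent with probability `1/n`, an item of `Q` only to agents who value it at `0`. Hence each
agent values her own expected bundle at `(∑_{Q̄} w) / n`, which is at least her value of any other
expected bundle and of a `1/n` share of all items.

Ex post, the items of `Q` cost their owner nothing and the items of `Q̄` are dealt round-robin from
mildest to worst. Once an agent drops her last (worst) item, shifting her remaining positions by a
fixed offset `c < n` matches them with later, hence worse, items of any other agent, which gives
EF1 and EQ1; summing over the `n` turns gives PROP1.
-/

theorem Nat.add_le_of_mod_eq_of_lt {n p P : ℕ} (hmod : p % n = P % n) (hlt : p < P) :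
    p + n ≤ P := by
  have hdvd : n ∣ P - p := Nat.dvd_of_mod_eq_zero (Nat.sub_mod_eq_zero_of_mod_eq hmod.symm)
  have := Nat.le_of_dvd (Nat.sub_pos_of_lt hlt) hdvd
  omega

theorem sum_filter_mod_le_sum_erase_max {f : ℕ → ℝ} {M n t t' P : ℕ}
    (hf_nonpos : ∀ p < M, f p ≤ 0) (hf_anti : AntitoneOn f (Set.Iio M)) (ht' : t' < n)
    (hP : P ∈ (range M).filter (· % n = t)) (hP_max : ∀ p ∈ (range M).filter (· % n = t), p ≤ P) :
    ∑ p ∈ (range M).filter (· % n = t'), f p ≤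
      ∑ p ∈ ((range M).filter (· % n = t)).erase P, f p := by
  set C := fun s => (range M).filter (· % n = s)
  -- shifting by `c` maps every non-last position of class `t` to a later position of class `t'`
  set c := (t' + n - t) % n
  have hPM : P < M := mem_range.1 (mem_filter.1 hP).1
  have ht : t < n := (mem_filter.1 hP).2 ▸ Nat.mod_lt _ (by omega)
  have hc : c < n := Nat.mod_lt _ (by omega)
  have hshift : ∀ p ∈ (C t).erase P, p + c ∈ C t' ∧ f (p + c) ≤ f p := by
    intro p hp
    obtain ⟨hpP, hpC⟩ := mem_erase.1 hp
    obtain ⟨-, hpt⟩ := mem_filter.1 hpC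
    have hle : p + n ≤ P :=
      Nat.add_le_of_mod_eq_of_lt (hpt.trans (mem_filter.1 hP).2.symm)
        (lt_of_le_of_ne (hP_max p hpC) hpP)
    refine ⟨mem_filter.2 ⟨mem_range.2 (by omega), ?_⟩,
      hf_anti (Set.mem_Iio.2 (by omega)) (Set.mem_Iio.2 (by omega)) (by omega)⟩
    rw [Nat.add_mod, hpt, Nat.mod_mod, Nat.add_mod_mod, Nat.add_sub_cancel' (by omega),
      Nat.add_mod_right, Nat.mod_eq_of_lt ht']
  calc ∑ p ∈ C t', f p
      ≤ ∑ p ∈ ((C t).erase P).image (· + c), f p :=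
        sum_le_sum_of_subset_of_nonpos' (fun x hx => by
          obtain ⟨p, hp, rfl⟩ := mem_image.1 hx; exact (hshift p hp).1)
          fun p hp _ => hf_nonpos p (mem_range.1 (mem_filter.1 hp).1)
    _ = ∑ p ∈ (C t).erase P, f (p + c) := sum_image fun _ _ _ _ h => by simpa using h
    _ ≤ ∑ p ∈ (C t).erase P, f p := sum_le_sum fun p hp => (hshift p hp).2

theorem Equiv.Perm.card_mul_card_filter_apply_eq {α : Type*} [Fintype α] [DecidableEq α]
    (x y : α) :
    Fintype.card α * #{σ : Equiv.Perm α | σ x = y} = Fintype.card (Equiv.Perm α) := by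
  have hfiber : ∀ z, #{σ : Equiv.Perm α | σ x = z} = #{σ : Equiv.Perm α | σ x = y} := fun z =>
    card_equiv (Equiv.mulLeft (Equiv.swap z y)) fun σ => by
      simp [Equiv.swap_apply_eq_iff]
  have hcard := card_eq_sum_card_fiberwise (f := fun σ : Equiv.Perm α => σ x) (s := univ)
    (t := univ) fun _ _ => mem_coe.2 (mem_univ _)
  simp only [card_univ, hfiber, sum_const, smul_eq_mul] at hcard
  exact hcard.symm

theorem Finset.sum_prod_mul_ite_apply_eq {ι α R : Type*} [Fintype ι] [DecidableEq ι] [Fintype α]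
    [DecidableEq α] [CommSemiring R] (G : ι → α → R) (hG : ∀ j, ∑ a, G j a = 1) (j : ι) (a : α) :
    ∑ A : ι → α, (∏ k, G k (A k)) * (if A j = a then 1 else 0) = G j a := by
  set t : ι → Finset α := fun k => if k = j then {a} else univ
  have ht : Fintype.piFinset t = univ.filter fun A : ι → α => A j = a := by
    ext A
    simp only [Fintype.mem_piFinset, mem_filter, mem_univ, true_and, t]
    refine ⟨fun h => by simpa using h j, fun h k => ?_⟩
    split_ifs with hk <;> simp [hk, h]
  simp only [mul_ite, mul_one, mul_zero]
  rw [← sum_filter, ← ht, ← prod_univ_sum]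
  have hsum : ∀ k, ∑ b ∈ t k, G k b = if k = j then G j a else 1 := fun k => by
    by_cases hk : k = j <;> simp [t, hk, hG]
  rw [prod_congr rfl fun k _ => hsum k, prod_ite_eq' univ j, if_pos (mem_univ _)]

section Rank

variable {n m : ℕ} (w : Fin m → ℝ) (r : Fin n → Fin m → ℝ)

theorem chRank_lt_chRank {q q' : Fin m} (hq : q ∈ (chQ r)ᶜ)
    (hprec : w q > w q' ∨ (w q = w q' ∧ q < q')) : chRank w r q < chRank w r q' := by
  refine card_lt_card ⟨fun x hx => ?_, fun hsub => ?_⟩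
  · rw [mem_filter] at hx ⊢
    refine ⟨hx.1, ?_⟩
    rcases hx.2 with h | ⟨he, hl⟩ <;> rcases hprec with h' | ⟨he', hl'⟩
    · exact Or.inl (h'.trans h)
    · exact Or.inl (he' ▸ h)
    · exact Or.inl (he ▸ h')
    · exact Or.inr ⟨he.trans he', hl.trans hl'⟩
  · rcases (mem_filter.1 (hsub (mem_filter.2 ⟨hq, hprec⟩))).2 with h | ⟨_, h⟩ <;>
      exact lt_irrefl _ h

theorem chRank_lt_card {q : Fin m} (hq : q ∈ (chQ r)ᶜ) : chRank w r q < #(chQ r)ᶜ := by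
  refine (card_le_card fun x hx => mem_erase.2 ⟨?_, (mem_filter.1 hx).1⟩).trans_lt
    (card_erase_lt_of_mem hq)
  rintro rfl
  rcases (mem_filter.1 hx).2 with h | ⟨_, h⟩ <;> exact lt_irrefl _ h

theorem chRank_injOn : Set.InjOn (chRank w r) ((chQ r)ᶜ : Finset (Fin m)) := by
  intro q hq q' hq' h
  by_contra hne
  rcases lt_trichotomy (w q) (w q') with hw | hw | hw
  · exact (chRank_lt_chRank w r hq' (Or.inl hw)).ne' h
  · rcases lt_or_gt_of_ne hne with hl | hl
    · exact (chRank_lt_chRank w r hq (Or.inr ⟨hw, hl⟩)).ne h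
    · exact (chRank_lt_chRank w r hq' (Or.inr ⟨hw.symm, hl⟩)).ne' h
  · exact (chRank_lt_chRank w r hq (Or.inl hw)).ne h

theorem image_chRank : ((chQ r)ᶜ).image (chRank w r) = range #(chQ r)ᶜ :=
  eq_of_subset_of_card_le
    (fun p hp => by
      obtain ⟨q, hq, rfl⟩ := mem_image.1 hp
      exact mem_range.2 (chRank_lt_card w r hq))
    (by rw [card_range, card_image_of_injOn (chRank_injOn w r)])

theorem le_of_chRank_le {q q' : Fin m} (hq' : q' ∈ (chQ r)ᶜ)
    (h : chRank w r q ≤ chRank w r q') : w q' ≤ w q :=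
  not_lt.1 fun hlt => (chRank_lt_chRank w r hq' (Or.inl hlt)).not_ge h

/-- The inherent value of the item of rank `p` in `Q̄`, written as a sum over the fibre of the
rank so that no item has to be chosen (it is `0` if `p` is no rank). -/
def chRankedValue (p : ℕ) : ℝ := ∑ q ∈ (chQ r)ᶜ with chRank w r q = p, w q

/-- The items of `Q̄` that round-robin gives to the agent picking at turn `t` (`t < n`). -/
def rrBundle (t : ℕ) : Finset (Fin m) := (chQ r)ᶜ.filter fun q => chRank w r q % n = t

theorem chRankedValue_chRank {q : Fin m} (hq : q ∈ (chQ r)ᶜ) :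
    chRankedValue w r (chRank w r q) = w q :=
  sum_eq_single_of_mem q (mem_filter.2 ⟨hq, rfl⟩) fun _ hq' hne =>
    absurd (chRank_injOn w r (mem_filter.1 hq').1 hq (mem_filter.1 hq').2) hne

theorem sum_rrBundle (t : ℕ) :
    ∑ q ∈ rrBundle w r t, w q =
      ∑ p ∈ (range #(chQ r)ᶜ).filter (· % n = t), chRankedValue w r p := by
  rw [← image_chRank w r, filter_image, sum_image fun q hq q' hq' h =>
    chRank_injOn w r (mem_filter.1 hq).1 (mem_filter.1 hq').1 h]
  exact sum_congr rfl fun q hq => (chRankedValue_chRank w r (mem_filter.1 hq).1).symm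

theorem sum_range_sum_rrBundle (hn : 0 < n) (g : Fin m → ℝ) :
    ∑ t ∈ range n, ∑ q ∈ rrBundle w r t, g q = ∑ q ∈ (chQ r)ᶜ, g q :=
  sum_fiberwise_of_maps_to (fun _ _ => mem_range.2 (Nat.mod_lt _ hn)) g

/-- Round-robin allocation of chores is EF1. -/
theorem exists_sum_rrBundle_le_sum_erase (hw : ∀ j, w j ≤ 0) {t : ℕ}
    (hT : (rrBundle w r t).Nonempty) :
    ∃ e ∈ rrBundle w r t, ∀ t' < n,
      ∑ q ∈ rrBundle w r t', w q ≤ ∑ q ∈ (rrBundle w r t).erase e, w q := by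
  set C := (range #(chQ r)ᶜ).filter (· % n = t)
  have hC : C.Nonempty := by
    obtain ⟨q, hq⟩ := hT
    exact ⟨chRank w r q, mem_filter.2 ⟨mem_range.2 (chRank_lt_card w r (mem_filter.1 hq).1),
      (mem_filter.1 hq).2⟩⟩
  have hsurj : ∀ p < #(chQ r)ᶜ, ∃ q ∈ (chQ r)ᶜ, chRank w r q = p := fun p hp =>
    mem_image.1 ((image_chRank w r).symm ▸ mem_range.2 hp)
  obtain ⟨e, he, hrank⟩ := hsurj _ (mem_range.1 (mem_filter.1 (C.max'_mem hC)).1)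
  have heT : e ∈ rrBundle w r t := mem_filter.2 ⟨he, hrank ▸ (mem_filter.1 (C.max'_mem hC)).2⟩
  refine ⟨e, heT, fun t' ht' => ?_⟩
  rw [sum_erase_eq_sub heT, sum_rrBundle, sum_rrBundle, ← chRankedValue_chRank w r he, hrank,
    ← sum_erase_eq_sub (C.max'_mem hC)]
  refine sum_filter_mod_le_sum_erase_max (fun p _ => sum_nonpos fun q _ => hw q)
    (fun p hp p' hp' hle => ?_) ht' (C.max'_mem hC) (C.le_max')
  obtain ⟨q, hq, rfl⟩ := hsurj p hp
  obtain ⟨q', hq', rfl⟩ := hsurj p' hp'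
  rw [chRankedValue_chRank w r hq, chRankedValue_chRank w r hq']
  exact le_of_chRank_le w r hq' hle

end Rank

section RandChore

variable {n m : ℕ} (hn : 0 < n) (w : Fin m → ℝ) (r : Fin n → Fin m → ℝ)

/-- Conditioned on the permutation `σ`, `RandChore` assigns the items independently, item `q`
going to agent `a` with probability `randChoreKernel hn w r σ q a`. -/
def randChoreKernel (σ : Equiv.Perm (Fin n)) (q : Fin m) (a : Fin n) : ℝ :=
  if q ∈ chQ r then (if r a q = 0 then 1 / (#(chZ r q) : ℝ) else 0)
  else if a = σ ⟨chRank w r q % n, Nat.mod_lt _ hn⟩ then 1 else 0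

theorem randChoreKernel_nonneg (σ : Equiv.Perm (Fin n)) (q : Fin m) (a : Fin n) :
    0 ≤ randChoreKernel hn w r σ q a := by
  unfold randChoreKernel
  split_ifs <;> positivity

theorem sum_randChoreKernel (σ : Equiv.Perm (Fin n)) (q : Fin m) :
    ∑ a, randChoreKernel hn w r σ q a = 1 := by
  unfold randChoreKernel
  by_cases hq : q ∈ chQ r
  · obtain ⟨i, hi⟩ := (mem_filter.1 hq).2
    have hZ : (#(chZ r q) : ℝ) ≠ 0 := Nat.cast_ne_zero.2 (card_ne_zero_of_mem
      (mem_filter.2 ⟨mem_univ i, hi⟩))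
    simp only [hq, if_true]
    rw [← sum_filter, sum_const, nsmul_eq_mul]
    exact mul_one_div_cancel hZ
  · simp [hq]

theorem randChoreProb_eq_sum_prod (A : Fin m → Fin n) :
    randChoreProb hn w r A =
      (∑ σ, ∏ q, randChoreKernel hn w r σ q (A q)) / Fintype.card (Equiv.Perm (Fin n)) := by
  have hprod : ∀ σ : Equiv.Perm (Fin n), ∏ q, randChoreKernel hn w r σ q (A q) =
      (∏ q ∈ chQ r, if r (A q) q = 0 then (1 : ℝ) / (#(chZ r q) : ℝ) else 0) *
        if ∀ q ∈ (chQ r)ᶜ, A q = σ ⟨chRank w r q % n, Nat.mod_lt _ hn⟩ then 1 else 0 := by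
    intro σ
    rw [← prod_mul_prod_compl (chQ r)]
    unfold randChoreKernel
    congr 1
    · exact prod_congr rfl fun q hq => if_pos hq
    · rw [prod_congr rfl fun q hq => if_neg (mem_compl.1 hq), prod_boole]
      congr
  simp only [hprod, ← mul_sum, randChoreProb]
  ring

theorem implFrac_randChoreProb (q : Fin m) (i : Fin n) :
    implFrac (randChoreProb hn w r) q i =
      (∑ σ, randChoreKernel hn w r σ q i) / Fintype.card (Equiv.Perm (Fin n)) := by
  simp only [implFrac, randChoreProb_eq_sum_prod, div_mul_eq_mul_div, sum_mul, ← sum_div]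
  rw [sum_comm]
  simp only [sum_prod_mul_ite_apply_eq _ (sum_randChoreKernel hn w r _)]

theorem implFrac_randChoreProb_nonneg (q : Fin m) (i : Fin n) :
    0 ≤ implFrac (randChoreProb hn w r) q i := by
  rw [implFrac_randChoreProb]
  exact div_nonneg (sum_nonneg fun σ _ => randChoreKernel_nonneg hn w r σ q i) (Nat.cast_nonneg _)

theorem implFrac_randChoreProb_of_mem {q : Fin m} (hq : q ∈ chQ r) {i : Fin n} (hi : r i q ≠ 0) :
    implFrac (randChoreProb hn w r) q i = 0 := by
  simp [implFrac_randChoreProb, randChoreKernel, hq, hi]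

theorem implFrac_randChoreProb_of_notMem {q : Fin m} (hq : q ∉ chQ r) (i : Fin n) :
    implFrac (randChoreProb hn w r) q i = 1 / n := by
  have hcount := Equiv.Perm.card_mul_card_filter_apply_eq ⟨chRank w r q % n, Nat.mod_lt _ hn⟩ i
  rw [Fintype.card_fin] at hcount
  have hN : (Fintype.card (Equiv.Perm (Fin n)) : ℝ) ≠ 0 := Nat.cast_ne_zero.2 Fintype.card_ne_zero
  rw [implFrac_randChoreProb, div_eq_div_iff hN (Nat.cast_ne_zero.2 hn.ne'), ← hcount]
  simp [randChoreKernel, hq, eq_comm (a := i), sum_boole, mul_comm]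

theorem exists_perm_of_randChoreProb_pos {A : Fin m → Fin n} (hA : 0 < randChoreProb hn w r A) :
    ∃ σ : Equiv.Perm (Fin n), (∀ q ∈ (chQ r)ᶜ, A q = σ ⟨chRank w r q % n, Nat.mod_lt _ hn⟩) ∧
      ∀ q ∈ chQ r, r (A q) q = 0 := by
  rw [randChoreProb_eq_sum_prod] at hA
  have hsum : ∑ σ, ∏ q, randChoreKernel hn w r σ q (A q) ≠ 0 := fun h => by
    rw [h, zero_div] at hA
    exact lt_irrefl _ hA
  obtain ⟨σ, -, hσ⟩ := exists_ne_zero_of_sum_ne_zero hsum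
  have hK := prod_ne_zero_iff.1 hσ
  refine ⟨σ, fun q hq => ?_, fun q hq => ?_⟩
  · by_contra h
    exact hK q (mem_univ q) (by simp [randChoreKernel, mem_compl.1 hq, h])
  · by_contra h
    exact hK q (mem_univ q) (by simp [randChoreKernel, hq, h])

end RandChore

section Truthful

variable {n m : ℕ} {w : Fin m → ℝ} {v : Fin n → Fin m → ℝ}

theorem value_nonpos (hw : ∀ j, w j < 0) (hv : ∀ i j, v i j = 0 ∨ v i j = w j) (i : Fin n)
    (j : Fin m) : v i j ≤ 0 :=
  (hv i j).elim le_of_eq fun h => h ▸ (hw j).le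

theorem value_eq_of_notMem_chQ (hv : ∀ i j, v i j = 0 ∨ v i j = w j) {q : Fin m}
    (hq : q ∉ chQ v) (i : Fin n) : v i q = w q :=
  (hv i q).resolve_left fun h => hq (mem_filter.2 ⟨mem_univ q, i, h⟩)

theorem sum_value_le_sum_compl_chQ (hw : ∀ j, w j < 0) (hv : ∀ i j, v i j = 0 ∨ v i j = w j)
    (i : Fin n) : ∑ j, v i j ≤ ∑ q ∈ (chQ v)ᶜ, w q := by
  rw [← sum_add_sum_compl (chQ v) (v i),
    sum_congr rfl fun q hq => value_eq_of_notMem_chQ hv (mem_compl.1 hq) i]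
  linarith [sum_nonpos fun q (_ : q ∈ chQ v) => value_nonpos hw hv i q]

theorem fval_randChoreProb (hn : 0 < n) (hv : ∀ i j, v i j = 0 ∨ v i j = w j) (i k : Fin n) :
    fval (v i) (implFrac (randChoreProb hn w v)) k =
      ∑ q ∈ chQ v, implFrac (randChoreProb hn w v) q k * v i q + (∑ q ∈ (chQ v)ᶜ, w q) / n := by
  rw [fval, ← sum_add_sum_compl (chQ v), sum_div]
  congr 1
  refine sum_congr rfl fun q hq => ?_
  rw [implFrac_randChoreProb_of_notMem hn w v (mem_compl.1 hq),
    value_eq_of_notMem_chQ hv (mem_compl.1 hq)]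
  ring

theorem fval_randChoreProb_self (hn : 0 < n) (hv : ∀ i j, v i j = 0 ∨ v i j = w j) (i : Fin n) :
    fval (v i) (implFrac (randChoreProb hn w v)) i = (∑ q ∈ (chQ v)ᶜ, w q) / n := by
  rw [fval_randChoreProb hn hv, add_eq_right]
  refine sum_eq_zero fun q hq => ?_
  by_cases hi : v i q = 0
  · rw [hi, mul_zero]
  · rw [implFrac_randChoreProb_of_mem hn w v hq hi, zero_mul]

theorem fval_randChoreProb_le (hn : 0 < n) (hw : ∀ j, w j < 0)
    (hv : ∀ i j, v i j = 0 ∨ v i j = w j) (i k : Fin n) :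
    fval (v i) (implFrac (randChoreProb hn w v)) k ≤ (∑ q ∈ (chQ v)ᶜ, w q) / n := by
  rw [fval_randChoreProb hn hv, add_le_iff_nonpos_left]
  exact sum_nonpos fun q _ =>
    mul_nonpos_of_nonneg_of_nonpos (implFrac_randChoreProb_nonneg hn w v q k)
      (value_nonpos hw hv i q)

end Truthful

theorem bundle_erase_of_mem_of_ne {m n : ℕ} {A : Fin m → Fin n} {i k : Fin n} {e : Fin m}
    (he : e ∈ bundle A i) (hik : i ≠ k) : (bundle A k).erase e = bundle A k :=
  erase_eq_of_notMem fun hek => hik ((mem_filter.1 he).2.symm.trans (mem_filter.1 hek).2)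

section RoundRobinAllocation

variable {n m : ℕ} (hn : 0 < n) {w : Fin m → ℝ} {v : Fin n → Fin m → ℝ}
  {A : Fin m → Fin n} {σ : Equiv.Perm (Fin n)}
  (hσ : ∀ q ∈ (chQ v)ᶜ, A q = σ ⟨chRank w v q % n, Nat.mod_lt _ hn⟩)
  (hA : ∀ q ∈ chQ v, v (A q) q = 0)
include hσ

theorem bundle_sdiff_chQ (k : Fin n) : bundle A k \ chQ v = rrBundle w v (σ.symm k) := by
  ext q
  simp only [bundle, rrBundle, mem_sdiff, mem_filter, mem_univ, true_and, mem_compl]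
  rw [and_comm]
  refine and_congr_right fun hq => ?_
  rw [hσ q (mem_compl.2 hq), ← Equiv.eq_symm_apply, Fin.ext_iff]

theorem sval_bundle_le (hw : ∀ j, w j < 0) (hv : ∀ i j, v i j = 0 ∨ v i j = w j) (i k : Fin n) :
    sval (v i) (bundle A k) ≤ ∑ q ∈ rrBundle w v (σ.symm k), w q := by
  rw [sval, ← sum_inter_add_sum_sdiff _ (chQ v), bundle_sdiff_chQ hn hσ,
    sum_congr rfl fun q (hq : q ∈ rrBundle w v (σ.symm k)) =>
      value_eq_of_notMem_chQ hv (mem_compl.1 (mem_filter.1 hq).1) i]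
  linarith [sum_nonpos fun q (_ : q ∈ bundle A k ∩ chQ v) => value_nonpos hw hv i q]

include hA

theorem sval_bundle_self (hv : ∀ i j, v i j = 0 ∨ v i j = w j) (k : Fin n) :
    sval (v k) (bundle A k) = ∑ q ∈ rrBundle w v (σ.symm k), w q := by
  rw [sval, ← sum_inter_add_sum_sdiff _ (chQ v), bundle_sdiff_chQ hn hσ,
    sum_congr rfl fun q (hq : q ∈ rrBundle w v (σ.symm k)) =>
      value_eq_of_notMem_chQ hv (mem_compl.1 (mem_filter.1 hq).1) k, add_eq_right]
  refine sum_eq_zero fun q hq => ?_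
  obtain ⟨hqk, hqQ⟩ := mem_inter.1 hq
  simpa [(mem_filter.1 hqk).2] using hA q hqQ

theorem sval_bundle_eq_zero_or_exists_erase (hw : ∀ j, w j < 0)
    (hv : ∀ i j, v i j = 0 ∨ v i j = w j) (i : Fin n) :
    sval (v i) (bundle A i) = 0 ∨ ∃ e ∈ bundle A i, ∀ t < n,
      ∑ q ∈ rrBundle w v t, w q ≤ sval (v i) ((bundle A i).erase e) := by
  rcases (rrBundle w v (σ.symm i)).eq_empty_or_nonempty with hT | hT
  · left
    rw [sval_bundle_self hn hσ hA hv, hT, sum_empty]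
  · right
    obtain ⟨e, heT, hle⟩ := exists_sum_rrBundle_le_sum_erase w v (fun j => (hw j).le) hT
    have he : e ∈ bundle A i \ chQ v := bundle_sdiff_chQ hn hσ i ▸ heT
    refine ⟨e, (mem_sdiff.1 he).1, fun t ht => (hle t ht).trans_eq ?_⟩
    have herase : sval (v i) ((bundle A i).erase e) = sval (v i) (bundle A i) - v i e :=
      sum_erase_eq_sub (mem_sdiff.1 he).1
    rw [herase, sval_bundle_self hn hσ hA hv, sum_erase_eq_sub heT,
      value_eq_of_notMem_chQ hv (mem_sdiff.1 he).2]

theorem EF1_of_roundRobin (hw : ∀ j, w j < 0) (hv : ∀ i j, v i j = 0 ∨ v i j = w j) :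
    EF1 v A := by
  intro i k
  by_cases hik : i = k
  · exact Or.inl (hik ▸ le_rfl)
  rcases sval_bundle_eq_zero_or_exists_erase hn hσ hA hw hv i with h0 | ⟨e, he, hle⟩
  · exact Or.inl (h0 ▸ sum_nonpos fun q _ => value_nonpos hw hv i q)
  · refine Or.inr ⟨e, mem_union_left _ he, ?_⟩
    rw [bundle_erase_of_mem_of_ne he hik]
    exact (sval_bundle_le hn hσ hw hv i k).trans (hle _ (σ.symm k).isLt)

theorem EQ1_of_roundRobin (hw : ∀ j, w j < 0) (hv : ∀ i j, v i j = 0 ∨ v i j = w j) :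
    EQ1 v A := by
  intro i k
  by_cases hik : i = k
  · exact Or.inl (hik ▸ le_rfl)
  rcases sval_bundle_eq_zero_or_exists_erase hn hσ hA hw hv i with h0 | ⟨e, he, hle⟩
  · exact Or.inl (h0 ▸ sum_nonpos fun q _ => value_nonpos hw hv k q)
  · refine Or.inr ⟨e, mem_union_left _ he, ?_⟩
    rw [bundle_erase_of_mem_of_ne he hik, sval_bundle_self hn hσ hA hv]
    exact hle _ (σ.symm k).isLt

theorem PROP1_of_roundRobin (hw : ∀ j, w j < 0) (hv : ∀ i j, v i j = 0 ∨ v i j = w j) :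
    PROP1 v A := by
  intro i
  have hn' : (0 : ℝ) < n := Nat.cast_pos.2 hn
  rcases sval_bundle_eq_zero_or_exists_erase hn hσ hA hw hv i with h0 | ⟨e, he, hle⟩
  · refine Or.inl (h0 ▸ div_nonpos_of_nonpos_of_nonneg ?_ hn'.le)
    exact sum_nonpos fun q _ => value_nonpos hw hv i q
  · refine Or.inr (Or.inr ⟨e, he, ?_⟩)
    rw [ge_iff_le, div_le_iff₀ hn']
    calc ∑ j, v i j ≤ ∑ q ∈ (chQ v)ᶜ, w q := sum_value_le_sum_compl_chQ hw hv i
      _ = ∑ t ∈ range n, ∑ q ∈ rrBundle w v t, w q := (sum_range_sum_rrBundle w v hn w).symm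
      _ ≤ ∑ _t ∈ range n, sval (v i) ((bundle A i).erase e) :=
        sum_le_sum fun t ht => hle t (mem_range.1 ht)
      _ = sval (v i) ((bundle A i).erase e) * n := by simp [mul_comm]

end RoundRobinAllocation

/-- on any truthful 1-restricted additive chores profile, `RandChore` is
ex-ante EF, EQ and PROP, and ex-post EF1, EQ1 and PROP1. -/
theorem randChore_BoBW_fairness (n m : ℕ) (hn : 0 < n)
    (w : Fin m → ℝ) (hw : ∀ j, w j < 0)
    (v : Fin n → Fin m → ℝ) (hv : ∀ i j, v i j = 0 ∨ v i j = w j) :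
    -- ex-ante envy-freeness
    (∀ i k : Fin n, fval (v i) (implFrac (randChoreProb hn w v)) i ≥
        fval (v i) (implFrac (randChoreProb hn w v)) k) ∧
    -- ex-ante equitability
    (∀ i k : Fin n, fval (v i) (implFrac (randChoreProb hn w v)) i =
        fval (v k) (implFrac (randChoreProb hn w v)) k) ∧
    -- ex-ante proportionality
    (∀ i : Fin n, fval (v i) (implFrac (randChoreProb hn w v)) i ≥ (∑ j, v i j) / (n : ℝ)) ∧
    -- ex-post EF1, EQ1, PROP1
    (∀ A : Fin m → Fin n, 0 < randChoreProb hn w v A → EF1 v A ∧ EQ1 v A ∧ PROP1 v A) := by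
  refine ⟨fun i k => ?_, fun i k => ?_, fun i => ?_, fun A hA => ?_⟩
  · rw [fval_randChoreProb_self hn hv]
    exact fval_randChoreProb_le hn hw hv i k
  · rw [fval_randChoreProb_self hn hv, fval_randChoreProb_self hn hv]
  · rw [fval_randChoreProb_self hn hv]
    exact div_le_div_of_nonneg_right (sum_value_le_sum_compl_chQ hw hv i) (Nat.cast_nonneg n)
  · obtain ⟨σ, hσ, hQ⟩ := exists_perm_of_randChoreProb_pos hn w v hA
    exact ⟨EF1_of_roundRobin hn hσ hQ hw hv, EQ1_of_roundRobin hn hσ hQ hw hv,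
      PROP1_of_roundRobin hn hσ hQ hw hv⟩
end
end

section
/- For every n ≥ 2 consider n agents and m = n(n-1)+1 chores with identical additive valuations: v(e_j) = -1 for all j ≤ n(n-1) and v(e_m) = -n. Then: (a) the maximum egalitarian welfare over all deterministic allocations equals -n; and (b) the round-robin allocation obtained by listing the items in nonincreasing order of value (so the value -n item is last) and assigning the t-th listed item to agent ((t-1) mod n) + 1 gives agent 1 the bundle consisting of n-1 items of value -1 plus the item of value -n, so its egalitarian welfare is -(2n-1). Hence this allocation, which lies in the support of RandChore's output, achieves only a (2n-1)/n fraction of the optimal egalitarian welfare; in particular RandChore is not an ex-post ((2n-1)/n - ε)-approximation of the maximum egalitarian welfare for any ε > 0. -/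
open Finset

attribute [local instance] Classical.propDecidable

noncomputable section

/-!
The chores are worth `-n²` in total, so in every allocation some agent's bundle is worth at most
the average `-n`; giving the `-n` chore to agent `0` alone and `n` unit chores to each other agent
attains `-n`. Round robin gives agent `0` the items `0, n, …, n(n-1)`: `n` items, the last of them
the `-n` chore, worth `-(2n-1)`; since no round-robin bundle has more than `n` items, nobody does
worse.
-/

section Welfare

variable {m n : ℕ}

theorem sum_sval_bundle (f : Fin m → ℝ) (B : Fin m → Fin n) :
    ∑ i, sval f (bundle B i) = ∑ j, f j := by
  simpa [bundle, sval] using Finset.sum_fiberwise univ B f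

theorem card_mul_inf'_sval_bundle_le (f : Fin m → ℝ) (B : Fin m → Fin n)
    (h : (univ : Finset (Fin n)).Nonempty) :
    (n : ℝ) * univ.inf' h (fun i => sval f (bundle B i)) ≤ ∑ j, f j := by
  rw [← sum_sval_bundle f B, ← nsmul_eq_mul]
  simpa using card_nsmul_le_sum univ (fun i => sval f (bundle B i)) _
    fun i _ => inf'_le (fun i => sval f (bundle B i)) (mem_univ i)

end Welfare

theorem card_le_of_val_mod_eq {m n k r : ℕ} {s : Finset (Fin m)}
    (hlt : ∀ j ∈ s, (j : ℕ) < n * k) (hmod : ∀ j ∈ s, (j : ℕ) % n = r) : #s ≤ k := by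
  calc #s ≤ #(range k) := by
        refine card_le_card_of_injOn (fun j => (j : ℕ) / n) (fun j hj => ?_)
          fun a ha b hb hab => ?_
        · exact mem_range.2 (Nat.div_lt_of_lt_mul (hlt j hj))
        · have ha' := Nat.div_add_mod (a : ℕ) n
          have hb' := Nat.div_add_mod (b : ℕ) n
          rw [hmod a ha] at ha'
          rw [hmod b hb] at hb'
          exact Fin.ext (by simp only at hab; rw [← ha', ← hb', hab])
    _ = k := card_range k

section RoundRobin

variable {m n : ℕ} {A : Fin m → Fin n}

theorem mem_bundle_of_val_eq_mod (hA : ∀ q, (A q : ℕ) = q % n) {i : Fin n} {j : Fin m} :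
    j ∈ bundle A i ↔ (j : ℕ) % n = i := by
  simp [bundle, Fin.ext_iff, hA]

theorem card_bundle_le_of_val_eq_mod (hA : ∀ q, (A q : ℕ) = q % n) {k : ℕ} (hm : m ≤ n * k)
    (i : Fin n) : #(bundle A i) ≤ k :=
  card_le_of_val_mod_eq (fun j _ => j.isLt.trans_le hm)
    fun _ hj => (mem_bundle_of_val_eq_mod hA).1 hj

end RoundRobin

def balancedAllocation (n : ℕ) (hn : 2 ≤ n) (j : Fin (n * (n - 1) + 1)) : Fin n :=
  if (j : ℕ) < n * (n - 1) then
    ⟨(j : ℕ) % (n - 1) + 1, Nat.add_lt_of_lt_sub (Nat.mod_lt _ (Nat.sub_pos_of_lt hn))⟩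
  else ⟨0, Nat.zero_lt_of_lt hn⟩

theorem val_balancedAllocation {n : ℕ} (hn : 2 ≤ n) (j : Fin (n * (n - 1) + 1)) :
    (balancedAllocation n hn j : ℕ) =
      if (j : ℕ) < n * (n - 1) then (j : ℕ) % (n - 1) + 1 else 0 := by
  unfold balancedAllocation
  split <;> rfl

section HardInstance

variable {n : ℕ} {v : Fin (n * (n - 1) + 1) → ℝ}
  (hv : ∀ j, v j = if (j : ℕ) < n * (n - 1) then -1 else -(n : ℝ))
include hv

theorem sval_eq_neg_card_sub (S : Finset (Fin (n * (n - 1) + 1))) :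
    sval v S = -#S - if Fin.last _ ∈ S then (n : ℝ) - 1 else 0 := by
  have hv' : ∀ j, v j = -1 - if j = Fin.last _ then (n : ℝ) - 1 else 0 := by
    intro j
    by_cases hj : j = Fin.last _
    · simp [hv, hj]; ring
    · have hlt : (j : ℕ) < n * (n - 1) := Fin.lt_last_iff_ne_last.2 hj
      simp [hv, hj, hlt]
  simp only [sval, hv', sum_sub_distrib, sum_ite_eq', sum_const, nsmul_eq_mul, mul_neg, mul_one]

theorem sum_eq_neg_mul_self (hn : 1 ≤ n) : ∑ j, v j = -((n : ℝ) * n) := by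
  have h := sval_eq_neg_card_sub hv univ
  simp only [sval, card_univ, Fintype.card_fin, mem_univ, if_true] at h
  rw [h]
  push_cast [Nat.cast_sub hn]
  ring

theorem inf'_sval_bundle_le_neg (hn : 1 ≤ n) (B : Fin (n * (n - 1) + 1) → Fin n)
    (h : (univ : Finset (Fin n)).Nonempty) :
    univ.inf' h (fun i => sval v (bundle B i)) ≤ -(n : ℝ) := by
  have hsum := card_mul_inf'_sval_bundle_le v B h
  rw [sum_eq_neg_mul_self hv hn, ← mul_neg] at hsum
  exact le_of_mul_le_mul_left hsum (by exact_mod_cast hn)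

theorem neg_le_sval_bundle_balancedAllocation (hn : 2 ≤ n) (i : Fin n) :
    -(n : ℝ) ≤ sval v (bundle (balancedAllocation n hn) i) := by
  have hmem : ∀ j, j ∈ bundle (balancedAllocation n hn) i ↔
      (if (j : ℕ) < n * (n - 1) then (j : ℕ) % (n - 1) + 1 else 0) = i := fun j => by
    simp [bundle, Fin.ext_iff, val_balancedAllocation]
  rw [sval_eq_neg_card_sub hv]
  by_cases hi : (i : ℕ) = 0
  · have hsub : bundle (balancedAllocation n hn) i ⊆ {Fin.last _} := fun j hj => by
      rw [hmem, hi] at hj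
      split_ifs at hj with hj'
      exact mem_singleton.2 (Fin.ext (by have := j.isLt; simp only [Fin.val_last]; omega))
    have hcard : (#(bundle (balancedAllocation n hn) i) : ℝ) ≤ 1 := by
      exact_mod_cast (card_le_card hsub).trans (card_singleton _).le
    have hnR : (2 : ℝ) ≤ n := by exact_mod_cast hn
    split_ifs <;> linarith
  · have hlast : Fin.last _ ∉ bundle (balancedAllocation n hn) i := by simp [hmem, Ne.symm hi]
    have hitem : ∀ j ∈ bundle (balancedAllocation n hn) i,
        (j : ℕ) < (n - 1) * n ∧ (j : ℕ) % (n - 1) = i - 1 := fun j hj => by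
      rw [hmem] at hj
      split_ifs at hj with hj'
      · exact ⟨hj'.trans_eq (mul_comm _ _), by omega⟩
      · omega
    have hcard : (#(bundle (balancedAllocation n hn) i) : ℝ) ≤ n := by
      exact_mod_cast card_le_of_val_mod_eq (fun j hj => (hitem j hj).1) fun j hj => (hitem j hj).2
    rw [if_neg hlast]
    linarith

end HardInstance

section RoundRobinOnHardInstance

variable {n : ℕ} {A : Fin (n * (n - 1) + 1) → Fin n} (hA : ∀ q, (A q : ℕ) = q % n)
include hA

theorem card_bundle_le_self_of_val_eq_mod (hn : 1 ≤ n) (i : Fin n) : #(bundle A i) ≤ n :=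
  card_bundle_le_of_val_eq_mod hA (by
    calc n * (n - 1) + 1 ≤ n * (n - 1) + n := by omega
      _ = n * n := by rw [← Nat.mul_add_one, Nat.sub_add_cancel hn]) i

theorem last_mem_bundle_zero_of_val_eq_mod (hn : 0 < n) : Fin.last _ ∈ bundle A ⟨0, hn⟩ := by
  simp [mem_bundle_of_val_eq_mod hA]

theorem card_bundle_zero_of_val_eq_mod (hn : 0 < n) : #(bundle A ⟨0, hn⟩) = n := by
  refine le_antisymm (card_bundle_le_self_of_val_eq_mod hA hn _) ?_
  have hval : ∀ k ∈ range n, (Fin.ofNat (n * (n - 1) + 1) (k * n)).val = k * n := fun k hk => by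
    rw [Fin.val_ofNat, Nat.mod_eq_of_lt]
    have : k * n ≤ (n - 1) * n := Nat.mul_le_mul_right n (by have := mem_range.1 hk; omega)
    rw [mul_comm (n - 1)] at this
    omega
  calc n = #(range n) := (card_range n).symm
    _ ≤ #(bundle A ⟨0, hn⟩) := by
      refine card_le_card_of_injOn (fun k => Fin.ofNat (n * (n - 1) + 1) (k * n))
        (fun k hk => ?_) fun a ha b hb hab => ?_
      · rw [mem_coe, mem_bundle_of_val_eq_mod hA, hval k hk, Nat.mul_mod_left]
      · have := congrArg Fin.val hab
        simp only at this
        rw [hval a ha, hval b hb] at this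
        exact Nat.eq_of_mul_eq_mul_right hn this

variable {v : Fin (n * (n - 1) + 1) → ℝ}
  (hv : ∀ j, v j = if (j : ℕ) < n * (n - 1) then -1 else -(n : ℝ))
include hv

theorem sval_bundle_zero_of_val_eq_mod (hn : 0 < n) :
    sval v (bundle A ⟨0, hn⟩) = -(2 * (n : ℝ) - 1) := by
  rw [sval_eq_neg_card_sub hv, card_bundle_zero_of_val_eq_mod hA hn,
    if_pos (last_mem_bundle_zero_of_val_eq_mod hA hn)]
  ring

theorem inf'_sval_bundle_of_val_eq_mod (hn : 0 < n) (h : (univ : Finset (Fin n)).Nonempty) :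
    univ.inf' h (fun i => sval v (bundle A i)) = -(2 * (n : ℝ) - 1) := by
  refine le_antisymm ((inf'_le _ (mem_univ ⟨0, hn⟩)).trans_eq
    (sval_bundle_zero_of_val_eq_mod hA hv hn)) (le_inf' _ _ fun i _ => ?_)
  have hcard : (#(bundle A i) : ℝ) ≤ n := by
    exact_mod_cast card_bundle_le_self_of_val_eq_mod hA hn i
  have hnR : (1 : ℝ) ≤ n := by exact_mod_cast hn
  rw [sval_eq_neg_card_sub hv]
  split_ifs <;> linarith

end RoundRobinOnHardInstance

/-- for `n ≥ 2` agents and `m = n(n-1)+1` chores with identical valuations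
(`n(n-1)` chores of value `-1` and a last chore of value `-n`): (a) the optimal egalitarian
welfare over deterministic allocations is `-n`; and (b) the round-robin allocation `A`
obtained by listing the items in nonincreasing value order (the `-n` item last) under the
identity permutation — which is in the support of `RandChore` — gives agent `1` a bundle of
`n` items (namely `n-1` items of value `-1` plus the `-n` item) of value `-(2n-1)`, so its
egalitarian welfare is `-(2n-1)`. Hence `RandChore` is not ex-post
`((2n-1)/n - ε)`-approximate for the optimal egalitarian welfare for any `ε > 0`. -/
theorem randChore_EWM_lower_bound_instance (n : ℕ) (hn2 : 2 ≤ n)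
    (v : Fin (n * (n - 1) + 1) → ℝ)
    (hv : ∀ j, v j = if (j : ℕ) < n * (n - 1) then -1 else -(n : ℝ))
    (A : Fin (n * (n - 1) + 1) → Fin n)
    (hA : ∀ q, A q = ⟨(q : ℕ) % n, Nat.mod_lt _ (by omega)⟩) :
    -- (a) the optimal egalitarian welfare equals -n
    (Finset.univ.sup' ⟨fun _ => ⟨0, by omega⟩, Finset.mem_univ _⟩
        (fun B : Fin (n * (n - 1) + 1) → Fin n =>
          Finset.univ.inf' ⟨⟨0, by omega⟩, Finset.mem_univ _⟩
            (fun i => sval v (bundle B i))) = -(n : ℝ)) ∧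
    -- (b) agent 1 (index 0) receives n items of total value -(2n-1)
    (bundle A ⟨0, by omega⟩).card = n ∧
    sval v (bundle A ⟨0, by omega⟩) = -(2 * (n : ℝ) - 1) ∧
    -- and the egalitarian welfare of A equals -(2n-1)
    Finset.univ.inf' ⟨⟨0, by omega⟩, Finset.mem_univ _⟩
        (fun i => sval v (bundle A i)) = -(2 * (n : ℝ) - 1) := by
  have hn : 0 < n := by omega
  have hA' : ∀ q, (A q : ℕ) = q % n := fun q => by rw [hA q]
  refine ⟨le_antisymm ?_ ?_, card_bundle_zero_of_val_eq_mod hA' hn,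
    sval_bundle_zero_of_val_eq_mod hA' hv hn, inf'_sval_bundle_of_val_eq_mod hA' hv hn _⟩
  · exact sup'_le _ _ fun B _ => inf'_sval_bundle_le_neg hv hn B _
  · exact le_sup'_of_le _ (mem_univ (balancedAllocation n hn2))
      (le_inf' _ _ fun i _ => neg_le_sval_bundle_balancedAllocation hv hn2 i)
end
end
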